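/- Let ξ be a constrained smooth parameter on ℝ^(2D) and fix n ≥ 2. For 0 ≤ k ≤ n−1 define the matrix-valued functions (M_{n,k})_M{}^N := Σ_P ∂_M((ξ·∂)^k ξ^P)·∂^N((ξ·∂)^{n−k−1} ξ_P), and set κ_{n,k} := ((−1)^n·(n − 2k − 1))/(2·(n+1)·(k+1)!·(n−k)!) and α_{n,k} := ((−1)^n/(2·n!))·choose(n−1,k). Then at every point the ordered product Π_{k=0}^{n−1} (1 + κ_{n,k}·M_{n,k}) equals 1 + Σ_{k=0}^{n−1} κ_{n,k}·M_{n,k}, which in turn equals 1 + Σ_{k=0}^{n−1} (α_{n+1,k} − α_{n+1,n−k−1})·M_{n,k}. -/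

import Mathlib

open scoped BigOperators

/-- Index set of the doubled space ℝ^(2D). -/
abbrev DoubledIdx (D : ℕ) := Fin D ⊕ Fin D

/-- The doubled space ℝ^(2D). -/
abbrev DoubledSpace (D : ℕ) := DoubledIdx D → ℝ

/-- Partial derivative ∂_N f at x. -/
noncomputable def pd {D : ℕ} (f : DoubledSpace D → ℝ) (N : DoubledIdx D)
    (x : DoubledSpace D) : ℝ :=
  fderiv ℝ f x (Pi.single N 1)

/-- The constant O(D,D) metric η. -/
def eta (D : ℕ) : DoubledIdx D → DoubledIdx D → ℝ
  | Sum.inl i, Sum.inr j => if i = j then 1 else 0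
  | Sum.inr i, Sum.inl j => if i = j then 1 else 0
  | _, _ => 0

/-- Raised-index partial derivative ∂^M f := Σ_N η^{MN} ∂_N f. -/
noncomputable def pdUp {D : ℕ} (f : DoubledSpace D → ℝ) (M : DoubledIdx D)
    (x : DoubledSpace D) : ℝ :=
  ∑ N, eta D M N * pd f N x

/-- A constrained function: smooth and depending only on the first (inl) block. -/
def IsConstrained {D : ℕ} (f : DoubledSpace D → ℝ) : Prop :=
  ContDiff ℝ (⊤ : ℕ∞) f ∧
    ∀ x y : DoubledSpace D, (∀ i, x (Sum.inl i) = y (Sum.inl i)) → f x = f y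

/-- A parameter (generalized vector field) on the doubled space, components ξ^M. -/
abbrev Param (D : ℕ) := DoubledIdx D → DoubledSpace D → ℝ

/-- A constrained parameter: all components constrained. -/
def IsConstrainedParam {D : ℕ} (ξ : Param D) : Prop := ∀ M, IsConstrained (ξ M)

/-- A quasi-trivial parameter: δ^M = Σ_i ρ_i ∂^M σ_i. -/
def IsQuasiTrivial {D : ℕ} (δ : Param D) : Prop :=
  ∃ (r : ℕ) (ρ σ : Fin r → (DoubledSpace D → ℝ)),
    (∀ i, IsConstrained (ρ i)) ∧ (∀ i, IsConstrained (σ i)) ∧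
    ∀ M x, δ M x = ∑ i, ρ i x * pdUp (σ i) M x

/-- ∂^M ξ_P := Σ_{Q,R} η^{MQ} η_{PR} ∂_Q ξ^R. -/
noncomputable def pdUpLow {D : ℕ} (ξ : Param D) (M P : DoubledIdx D)
    (x : DoubledSpace D) : ℝ :=
  ∑ Q, ∑ R, eta D M Q * eta D P R * pd (ξ R) Q x

/-- Generalized Lie derivative (L̂_ξ V)_M. -/
noncomputable def glie {D : ℕ} (ξ V : Param D) : Param D :=
  fun M x => (∑ P, ξ P x * pd (V M) P x)
    + ∑ K, (pd (ξ K) M x - pdUpLow ξ K M x) * V K x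

/-- η-transpose of a matrix: t(X)_M{}^N := Σ_{P,Q} η_{MP} η^{NQ} X_Q{}^P. -/
def etaT {D : ℕ} (X : Matrix (DoubledIdx D) (DoubledIdx D) ℝ) :
    Matrix (DoubledIdx D) (DoubledIdx D) ℝ :=
  Matrix.of fun M N => ∑ P, ∑ Q, eta D M P * eta D N Q * X Q P

/-- The C-bracket of two parameters. -/
noncomputable def cbracket {D : ℕ} (ξ₁ ξ₂ : Param D) : Param D :=
  fun M x => (∑ P, ξ₁ P x * pd (ξ₂ M) P x) - (∑ P, ξ₂ P x * pd (ξ₁ M) P x)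
    - (1/2) * ∑ P, (ξ₁ P x * pdUpLow ξ₂ M P x - ξ₂ P x * pdUpLow ξ₁ M P x)

/-- Directional derivative (ξ·∂)f. -/
noncomputable def xid {D : ℕ} (ξ : Param D) (f : DoubledSpace D → ℝ)
    (x : DoubledSpace D) : ℝ :=
  ∑ P, ξ P x * pd f P x

/-- Iterated directional derivative (ξ·∂)^n f. -/
noncomputable def xidIter {D : ℕ} (ξ : Param D) : ℕ → (DoubledSpace D → ℝ) →
    DoubledSpace D → ℝ
  | 0, f => f
  | n+1, f => xid ξ (xidIter ξ n f)

/-- (M_{n,k})_M{}^N = Σ_P ∂_M((ξ·∂)^k ξ^P) · ∂^N((ξ·∂)^{n−k−1} ξ_P). -/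
noncomputable def Mmat {D : ℕ} (ξ : Param D) (n k : ℕ) (x : DoubledSpace D) :
    Matrix (DoubledIdx D) (DoubledIdx D) ℝ :=
  Matrix.of fun M N =>
    ∑ P, pd (xidIter ξ k (ξ P)) M x *
      (∑ Q, ∑ R, eta D N Q * eta D P R * pd (xidIter ξ (n-k-1) (ξ R)) Q x)

/-- The coefficients α_{n,k} = ((−1)^n / (2·n!))·C(n−1,k), as reals. -/
noncomputable def alphaCoeffR (n k : ℕ) : ℝ :=
  ((-1 : ℝ)^n / (2 * n.factorial)) * ((n-1).choose k)

/-- The coefficients κ_{n,k} of Berman, Perry and Cederwall, as reals. -/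
noncomputable def kappaCoeffR (n k : ℕ) : ℝ :=
  ((-1 : ℝ)^n * ((n : ℝ) - 2*k - 1)) / (2 * (n+1) * (k+1).factorial * (n-k).factorial)


section Aux

noncomputable def projL (D : ℕ) : DoubledSpace D →L[ℝ] DoubledSpace D :=
  ContinuousLinearMap.pi (fun M => match M with
    | Sum.inl i => ContinuousLinearMap.proj (Sum.inl i)
    | Sum.inr _ => 0)

lemma projL_apply_inl {D : ℕ} (x : DoubledSpace D) (i : Fin D) :
    projL D x (Sum.inl i) = x (Sum.inl i) := rfl

lemma constrained_comp_proj {D : ℕ} {f : DoubledSpace D → ℝ} (hf : IsConstrained f)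
    (x : DoubledSpace D) : f (projL D x) = f x :=
  hf.2 _ _ (fun i => projL_apply_inl x i)

lemma pd_eq_proj {D : ℕ} {f : DoubledSpace D → ℝ} (hf : IsConstrained f)
    (N : DoubledIdx D) (x : DoubledSpace D) :
    pd f N x = fderiv ℝ f (projL D x) (projL D (Pi.single N 1)) := by
  have hfd : Differentiable ℝ f := hf.1.differentiable (by simp)
  have hcomp : f = f ∘ (projL D) := by
    funext y; exact (constrained_comp_proj hf y).symm
  have : fderiv ℝ f x = (fderiv ℝ f (projL D x)).comp (projL D : DoubledSpace D →L[ℝ] DoubledSpace D) := by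
    conv_lhs => rw [hcomp]
    rw [fderiv_comp x (hfd _) (projL D).differentiableAt, (projL D).fderiv]
  rw [pd, this]; rfl

lemma pd_inr {D : ℕ} {f : DoubledSpace D → ℝ} (hf : IsConstrained f)
    (i : Fin D) (x : DoubledSpace D) : pd f (Sum.inr i) x = 0 := by
  rw [pd_eq_proj hf]
  have : projL D (Pi.single (Sum.inr i) 1) = 0 := by
    funext M
    cases M with
    | inl j => simp [projL, ContinuousLinearMap.pi_apply, Pi.single_apply]
    | inr j => rfl
  rw [this]; simp

lemma pd_congr_inl {D : ℕ} {f : DoubledSpace D → ℝ} (hf : IsConstrained f)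
    (N : DoubledIdx D) {x y : DoubledSpace D} (h : ∀ i, x (Sum.inl i) = y (Sum.inl i)) :
    pd f N x = pd f N y := by
  rw [pd_eq_proj hf, pd_eq_proj hf]
  have : projL D x = projL D y := by
    funext M; cases M with
    | inl j => rw [projL_apply_inl, projL_apply_inl]; exact h j
    | inr j => rfl
  rw [this]

lemma IsConstrained.pd {D : ℕ} {f : DoubledSpace D → ℝ} (hf : IsConstrained f)
    (N : DoubledIdx D) : IsConstrained (fun x => pd f N x) := by
  constructor
  · have h1 : ContDiff ℝ (⊤ : ℕ∞) (fderiv ℝ f) := hf.1.fderiv_right (by simp)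
    exact (ContinuousLinearMap.apply ℝ ℝ (Pi.single N 1)).contDiff.comp h1
  · exact fun x y h => pd_congr_inl hf N h

lemma IsConstrained.mul' {D : ℕ} {f g : DoubledSpace D → ℝ} (hf : IsConstrained f)
    (hg : IsConstrained g) : IsConstrained (fun x => f x * g x) :=
  ⟨hf.1.mul hg.1, fun x y h => by simp only []; rw [hf.2 x y h, hg.2 x y h]⟩

lemma IsConstrained.sum' {D : ℕ} {ι : Type*} (s : Finset ι) {f : ι → DoubledSpace D → ℝ}
    (hf : ∀ i ∈ s, IsConstrained (f i)) : IsConstrained (fun x => ∑ i ∈ s, f i x) := by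
  classical
  induction s using Finset.induction with
  | empty => exact ⟨contDiff_const, fun _ _ _ => rfl⟩
  | @insert a s hi ih =>
    simp only [Finset.sum_insert hi]
    have h1 := hf a (Finset.mem_insert_self a s)
    have h2 := ih (fun i his => hf i (Finset.mem_insert_of_mem his))
    exact ⟨h1.1.add h2.1, fun x y h => by
      have := h1.2 x y h; have := h2.2 x y h; simp_all⟩

lemma constrained_xid {D : ℕ} {ξ : Param D} (hξ : IsConstrainedParam ξ)
    {f : DoubledSpace D → ℝ} (hf : IsConstrained f) : IsConstrained (xid ξ f) := by
  have : xid ξ f = fun x => ∑ P, ξ P x * pd f P x := rfl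
  rw [this]
  exact IsConstrained.sum' _ (fun P _ => (hξ P).mul' (hf.pd P))

lemma constrained_xidIter {D : ℕ} {ξ : Param D} (hξ : IsConstrainedParam ξ)
    (m : ℕ) {f : DoubledSpace D → ℝ} (hf : IsConstrained f) :
    IsConstrained (xidIter ξ m f) := by
  induction m with
  | zero => exact hf
  | succ m ih => exact constrained_xid hξ ih

lemma pairing_zero {D : ℕ} {f g : DoubledSpace D → ℝ} (hf : IsConstrained f)
    (hg : IsConstrained g) (x : DoubledSpace D) :
    ∑ N, ∑ Q, eta D N Q * pd f Q x * pd g N x = 0 := by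
  rw [Fintype.sum_sum_type]
  have hinner : ∀ N : DoubledIdx D, ∑ Q, eta D N Q * pd f Q x * pd g N x
      = (∑ j, eta D N (Sum.inl j) * pd f (Sum.inl j) x * pd g N x)
      + ∑ j, eta D N (Sum.inr j) * pd f (Sum.inr j) x * pd g N x :=
    fun N => Fintype.sum_sum_type _
  simp only [hinner]
  have h1 : ∀ i j : Fin D, eta D (Sum.inl i) (Sum.inl j) = 0 := fun i j => rfl
  have h2 : ∀ i j : Fin D, eta D (Sum.inr i) (Sum.inr j) = 0 := fun i j => rfl
  simp only [h1, h2, zero_mul, Finset.sum_const_zero, add_zero, zero_add]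
  simp [pd_inr hf, pd_inr hg]

noncomputable def Umat {D : ℕ} (ξ : Param D) (k : ℕ) (x : DoubledSpace D) :
    Matrix (DoubledIdx D) (DoubledIdx D) ℝ :=
  Matrix.of fun M P => pd (xidIter ξ k (ξ P)) M x

noncomputable def Vmat {D : ℕ} (ξ : Param D) (m : ℕ) (x : DoubledSpace D) :
    Matrix (DoubledIdx D) (DoubledIdx D) ℝ :=
  Matrix.of fun P N => ∑ Q, ∑ R, eta D N Q * eta D P R * pd (xidIter ξ m (ξ R)) Q x

lemma Mmat_eq_UV {D : ℕ} (ξ : Param D) (n k : ℕ) (x : DoubledSpace D) :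
    Mmat ξ n k x = Umat ξ k x * Vmat ξ (n-k-1) x := by
  ext M N
  rw [Matrix.mul_apply]
  rfl

lemma VU_zero {D : ℕ} {ξ : Param D} (hξ : IsConstrainedParam ξ) (m l : ℕ)
    (x : DoubledSpace D) : Vmat ξ m x * Umat ξ l x = 0 := by
  ext P P'
  rw [Matrix.mul_apply, Matrix.zero_apply]
  have key : ∀ R, ∑ N, ∑ Q, eta D N Q * pd (xidIter ξ m (ξ R)) Q x
      * pd (xidIter ξ l (ξ P')) N x = 0 := fun R =>
    pairing_zero (constrained_xidIter hξ m (hξ R)) (constrained_xidIter hξ l (hξ P')) x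
  calc ∑ N, Vmat ξ m x P N * Umat ξ l x N P'
      = ∑ N, ∑ Q, ∑ R, eta D N Q * eta D P R * pd (xidIter ξ m (ξ R)) Q x
          * pd (xidIter ξ l (ξ P')) N x := by
        refine Finset.sum_congr rfl fun N _ => ?_
        simp only [Vmat, Umat, Matrix.of_apply, Finset.sum_mul]
    _ = ∑ R, ∑ N, ∑ Q, eta D N Q * eta D P R * pd (xidIter ξ m (ξ R)) Q x
          * pd (xidIter ξ l (ξ P')) N x := by
        exact (Finset.sum_congr rfl fun N _ => Finset.sum_comm).trans Finset.sum_comm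
    _ = ∑ R, eta D P R * ∑ N, ∑ Q, eta D N Q * pd (xidIter ξ m (ξ R)) Q x
          * pd (xidIter ξ l (ξ P')) N x := by
        refine Finset.sum_congr rfl fun R _ => ?_
        rw [Finset.mul_sum]
        refine Finset.sum_congr rfl fun N _ => ?_
        rw [Finset.mul_sum]
        refine Finset.sum_congr rfl fun Q _ => ?_
        ring
    _ = 0 := Finset.sum_eq_zero fun R _ => by rw [key R, mul_zero]

lemma Mmat_mul_Mmat {D : ℕ} {ξ : Param D} (hξ : IsConstrainedParam ξ)
    (n k n' l : ℕ) (x : DoubledSpace D) :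
    Mmat ξ n k x * Mmat ξ n' l x = 0 := by
  rw [Mmat_eq_UV, Mmat_eq_UV, Matrix.mul_assoc, ← Matrix.mul_assoc (Vmat ξ (n-k-1) x),
    VU_zero hξ, Matrix.zero_mul, Matrix.mul_zero]

lemma mul_list_sum_zero {R : Type*} [Ring R] (A : R) :
    ∀ (L : List R), (∀ b ∈ L, A * b = 0) → A * L.sum = 0 := by
  intro L
  induction L with
  | nil => simp
  | cons b T ih =>
    intro h
    rw [List.sum_cons, mul_add, h b List.mem_cons_self,
      ih (fun c hc => h c (List.mem_cons_of_mem b hc)), add_zero]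

lemma prod_one_add {R : Type*} [Ring R] :
    ∀ (L : List R), (∀ a ∈ L, ∀ b ∈ L, a * b = 0) →
      (L.map (fun A => 1 + A)).prod = 1 + L.sum := by
  intro L
  induction L with
  | nil => simp
  | cons A T ih =>
    intro h
    rw [List.map_cons, List.prod_cons, List.sum_cons,
      ih (fun a ha b hb => h a (List.mem_cons_of_mem A ha) b (List.mem_cons_of_mem A hb))]
    have hA : A * T.sum = 0 := mul_list_sum_zero A T
      (fun b hb => h A List.mem_cons_self b (List.mem_cons_of_mem A hb))
    rw [add_mul, one_mul, mul_add, mul_one, hA, add_zero]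
    abel

lemma coeff_eq (n k : ℕ) (hk : k < n) :
    kappaCoeffR n k = alphaCoeffR (n+1) k - alphaCoeffR (n+1) (n-k-1) := by
  obtain ⟨j, rfl⟩ : ∃ j, n = k + 1 + j := ⟨n - k - 1, by omega⟩
  have e1 : k + 1 + j - k - 1 = j := by omega
  have e2 : k + 1 + j - k = j + 1 := by omega
  have e3 : k + 1 + j + 1 - 1 = k + 1 + j := by omega
  rw [kappaCoeffR, alphaCoeffR, alphaCoeffR, e1, e2, e3]
  have h1 : ((k+1+j).choose k : ℝ) * k.factorial * (j+1).factorial = (k+1+j).factorial := by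
    have := Nat.choose_mul_factorial_mul_factorial (show k ≤ k+1+j by omega)
    have e : k + 1 + j - k = j + 1 := by omega
    rw [e] at this
    exact_mod_cast congrArg (Nat.cast : ℕ → ℝ) this
  have h2 : ((k+1+j).choose j : ℝ) * j.factorial * (k+1).factorial = (k+1+j).factorial := by
    have := Nat.choose_mul_factorial_mul_factorial (show j ≤ k+1+j by omega)
    have e : k + 1 + j - j = k + 1 := by omega
    rw [e] at this
    exact_mod_cast congrArg (Nat.cast : ℕ → ℝ) this
  have hk0 : (k.factorial : ℝ) ≠ 0 := Nat.cast_ne_zero.mpr k.factorial_ne_zero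
  have hj0 : (j.factorial : ℝ) ≠ 0 := Nat.cast_ne_zero.mpr j.factorial_ne_zero
  have hkj0 : ((k+1+j).factorial : ℝ) ≠ 0 := Nat.cast_ne_zero.mpr (k+1+j).factorial_ne_zero
  have c1 : ((k+1+j).choose k : ℝ) = (k+1+j).factorial / (k.factorial * (j+1).factorial) := by
    rw [eq_div_iff (by positivity), ← mul_assoc] at *
    linarith [h1]
  have c2 : ((k+1+j).choose j : ℝ) = (k+1+j).factorial / (j.factorial * (k+1).factorial) := by
    rw [eq_div_iff (by positivity), ← mul_assoc] at *
    linarith [h2]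
  rw [c1, c2]
  rw [show (k+1+j+1) = (k+1+j)+1 from rfl, Nat.factorial_succ (k+1+j),
    Nat.factorial_succ k, Nat.factorial_succ j]
  push_cast
  field_simp
  ring

end Aux

/-- The ordered product Π_{k=0}^{n−1}(1 + κ_{n,k} M_{n,k}) equals
1 + Σ_k κ_{n,k} M_{n,k}, which equals 1 + Σ_k (α_{n+1,k} − α_{n+1,n−k−1}) M_{n,k}. -/
theorem stmt_18 {D : ℕ} (ξ : Param D) (hξ : IsConstrainedParam ξ)
    (n : ℕ) (hn : 2 ≤ n) (x : DoubledSpace D) :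
    (List.ofFn (fun k : Fin n =>
        (1 : Matrix (DoubledIdx D) (DoubledIdx D) ℝ) + kappaCoeffR n k • Mmat ξ n k x)).prod
      = 1 + ∑ k ∈ Finset.range n, kappaCoeffR n k • Mmat ξ n k x ∧
    (1 : Matrix (DoubledIdx D) (DoubledIdx D) ℝ)
        + ∑ k ∈ Finset.range n, kappaCoeffR n k • Mmat ξ n k x
      = 1 + ∑ k ∈ Finset.range n,
          (alphaCoeffR (n+1) k - alphaCoeffR (n+1) (n-k-1)) • Mmat ξ n k x := by
  have hmul : ∀ a ∈ List.ofFn (fun k : Fin n => kappaCoeffR n k • Mmat ξ n k x),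
      ∀ b ∈ List.ofFn (fun k : Fin n => kappaCoeffR n k • Mmat ξ n k x), a * b = 0 := by
    intro a ha b hb
    obtain ⟨i, rfl⟩ := List.mem_ofFn.mp ha
    obtain ⟨j, rfl⟩ := List.mem_ofFn.mp hb
    rw [smul_mul_assoc, mul_smul_comm, Mmat_mul_Mmat hξ, smul_zero, smul_zero]
  constructor
  · have hmap : List.ofFn (fun k : Fin n =>
        (1 : Matrix (DoubledIdx D) (DoubledIdx D) ℝ) + kappaCoeffR n k • Mmat ξ n k x)
        = (List.ofFn (fun k : Fin n => kappaCoeffR n k • Mmat ξ n k x)).map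
            (fun A => 1 + A) := List.map_ofFn.symm
    rw [hmap, prod_one_add _ hmul, List.sum_ofFn]
    congr 1
    exact Fin.sum_univ_eq_sum_range (fun k => kappaCoeffR n k • Mmat ξ n k x) n
  · congr 1
    refine Finset.sum_congr rfl fun k hk => ?_
    rw [coeff_eq n k (Finset.mem_range.mp hk)]
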